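/- arXiv:1903.08620 — 4 statements merged into one kernel-verified Lean document; each statement's English description precedes it below -/
import Mathlib

section
/- Let $\upsilon \in \ell^1(\mathbb{Z})$ be a complex sequence and let $\lambda \in \mathbb{C} \setminus [-2,2]$, with $\lambda = k + k^{-1}$ for $0 < |k| < 1$. Define the Birman–Schwinger operator $K(\lambda)$ on $\ell^2(\mathbb{Z})$ by its matrix entries $K(\lambda)_{m,n} = \sqrt{|\upsilon_m|} \, \frac{k^{|m-n|}}{k - k^{-1}} \, \sqrt{|\upsilon_n|}\,\mathrm{sgn}(\upsilon_n)$. Then $K(\lambda)$ is bounded with operator norm $\|K(\lambda)\| \le \|\upsilon\|_{\ell^1(\mathbb{Z})} / \sqrt{|\lambda^2 - 4|}$. -/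
/-!
Since `|k| < 1`, each entry of `K(λ)` is bounded by `|k - k⁻¹|⁻¹ √|v_m| √|v_n|`: the matrix is
dominated entrywise by the rank-one matrix `a ⊗ b` with `a = √|v| / |k - k⁻¹|`, `b = √|v|` in `ℓ²`.
Cauchy–Schwarz in each row shows that a matrix dominated by `a ⊗ b` acts on `ℓ²` with norm at most
`‖a‖ ‖b‖`, which here is `‖v‖₁ / |k - k⁻¹| = ‖v‖₁ / √|λ² - 4|`.
-/

noncomputable section

/-- `ℓ²(ℤ)`. -/
abbrev l2Z := lp (fun _ : ℤ => ℂ) 2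

/-- The complex signum function: `sgn z = z/|z|` for `z ≠ 0` and `sgn 0 = 0`. -/
def csgn (z : ℂ) : ℂ := if z = 0 then 0 else z / ‖z‖

theorem holderConjugate_toReal_two_two :
    (2 : ENNReal).toReal.HolderConjugate (2 : ENNReal).toReal := by
  simpa using Real.HolderConjugate.two_two

section DominatedMatrix

variable {ι 𝕜 : Type*} [RCLike 𝕜] {c : ι → ι → 𝕜} {a b : lp (fun _ : ι => 𝕜) 2}

theorem norm_mul_le_of_norm_le (hc : ∀ i j, ‖c i j‖ ≤ ‖a i‖ * ‖b j‖)
    (g : lp (fun _ : ι => 𝕜) 2) (i j : ι) : ‖c i j * g j‖ ≤ ‖a i‖ * (‖b j‖ * ‖g j‖) := by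
  rw [norm_mul, ← mul_assoc]
  exact mul_le_mul_of_nonneg_right (hc i j) (norm_nonneg _)

theorem summable_norm_mul_of_norm_le (hc : ∀ i j, ‖c i j‖ ≤ ‖a i‖ * ‖b j‖)
    (g : lp (fun _ : ι => 𝕜) 2) (i : ι) : Summable fun j => ‖c i j * g j‖ :=
  ((lp.summable_mul holderConjugate_toReal_two_two b g).mul_left ‖a i‖).of_nonneg_of_le
    (fun _ => norm_nonneg _) (norm_mul_le_of_norm_le hc g i)

theorem norm_tsum_mul_le_of_norm_le (hc : ∀ i j, ‖c i j‖ ≤ ‖a i‖ * ‖b j‖)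
    (g : lp (fun _ : ι => 𝕜) 2) (i : ι) : ‖∑' j, c i j * g j‖ ≤ ‖a i‖ * (‖b‖ * ‖g‖) := by
  have hbg := lp.tsum_mul_le_mul_norm holderConjugate_toReal_two_two b g
  calc ‖∑' j, c i j * g j‖ ≤ ∑' j, ‖c i j * g j‖ :=
        norm_tsum_le_tsum_norm (summable_norm_mul_of_norm_le hc g i)
    _ ≤ ∑' j, ‖a i‖ * (‖b j‖ * ‖g j‖) :=
        (summable_norm_mul_of_norm_le hc g i).tsum_le_tsum (norm_mul_le_of_norm_le hc g i)
          (hbg.1.mul_left _)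
    _ ≤ ‖a i‖ * (‖b‖ * ‖g‖) := by
        rw [tsum_mul_left]
        exact mul_le_mul_of_nonneg_left hbg.2 (norm_nonneg _)

theorem exists_clm_apply_eq_tsum_of_norm_le (hc : ∀ i j, ‖c i j‖ ≤ ‖a i‖ * ‖b j‖) :
    ∃ K : lp (fun _ : ι => 𝕜) 2 →L[𝕜] lp (fun _ : ι => 𝕜) 2,
      (∀ g i, K g i = ∑' j, c i j * g j) ∧ ‖K‖ ≤ ‖a‖ * ‖b‖ := by
  have hsum (g : lp (fun _ : ι => 𝕜) 2) i : Summable fun j => c i j * g j :=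
    (summable_norm_mul_of_norm_le hc g i).of_norm
  have hdom (g : lp (fun _ : ι => 𝕜) 2) i :
      ‖∑' j, c i j * g j‖ ≤ ‖(((‖b‖ * ‖g‖ : ℝ) : 𝕜) • a) i‖ :=
    (norm_tsum_mul_le_of_norm_le hc g i).trans_eq (by simp [mul_comm])
  have hmem (g : lp (fun _ : ι => 𝕜) 2) : Memℓp (fun i => ∑' j, c i j * g j) 2 :=
    (lp.memℓp _).mono' (hdom g)
  let L : lp (fun _ : ι => 𝕜) 2 →ₗ[𝕜] lp (fun _ : ι => 𝕜) 2 :=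
    { toFun g := ⟨fun i => ∑' j, c i j * g j, hmem g⟩
      map_add' g h := by
        ext i
        simp only [lp.coeFn_add, Pi.add_apply, mul_add]
        exact (hsum g i).tsum_add (hsum h i)
      map_smul' r g := by
        ext i
        simp only [lp.coeFn_smul, Pi.smul_apply, smul_eq_mul, mul_left_comm _ r]
        exact tsum_mul_left }
  refine ⟨L.mkContinuous (‖a‖ * ‖b‖) fun g => ?_, fun g i => rfl,
    L.mkContinuous_norm_le (by positivity) _⟩
  simpa [norm_smul, mul_comm, mul_left_comm, mul_assoc] using
    lp.norm_mono two_ne_zero (x := L g) (hdom g)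

theorem inner_single_apply_single_of_apply_eq_tsum [DecidableEq ι]
    {K : lp (fun _ : ι => 𝕜) 2 →L[𝕜] lp (fun _ : ι => 𝕜) 2}
    (hK : ∀ g i, K g i = ∑' j, c i j * g j) (m n : ι) :
    inner 𝕜 (lp.single 2 m 1 : lp (fun _ : ι => 𝕜) 2) (K (lp.single 2 n 1)) = c m n := by
  rw [lp.inner_single_left, hK, tsum_eq_single n fun j hj => by simp [hj]]
  simp

end DominatedMatrix

section SqrtNorm

variable {ι 𝕜 E : Type*} [RCLike 𝕜] [NormedAddCommGroup E] {u : ι → E}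

theorem memℓp_two_sqrt_norm (hu : Summable fun i => ‖u i‖) :
    Memℓp (fun i => (√‖u i‖ : 𝕜)) 2 :=
  memℓp_gen (by simpa [Real.sq_sqrt] using hu)

variable (𝕜) in
def sqrtNormL2 (hu : Summable fun i => ‖u i‖) : lp (fun _ : ι => 𝕜) 2 :=
  ⟨_, memℓp_two_sqrt_norm hu⟩

@[simp]
theorem norm_sqrtNormL2_apply (hu : Summable fun i => ‖u i‖) (i : ι) :
    ‖sqrtNormL2 𝕜 hu i‖ = √‖u i‖ := by
  simp [sqrtNormL2, Real.sqrt_nonneg]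

theorem norm_sqrtNormL2 (hu : Summable fun i => ‖u i‖) :
    ‖sqrtNormL2 𝕜 hu‖ = √(∑' i, ‖u i‖) := by
  rw [← Real.sqrt_sq (norm_nonneg _)]
  congr 1
  simpa [Real.sq_sqrt] using lp.norm_rpow_eq_tsum (by norm_num) (sqrtNormL2 𝕜 hu)

end SqrtNorm

theorem norm_csgn_le_one (z : ℂ) : ‖csgn z‖ ≤ 1 := by
  unfold csgn
  split_ifs with h
  · simp
  · rw [norm_div, Complex.norm_real, norm_norm, div_self (norm_ne_zero_iff.mpr h)]

theorem sqrt_norm_add_inv_sq_sub_four {k : ℂ} (hk : k ≠ 0) :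
    √‖(k + k⁻¹) ^ 2 - 4‖ = ‖k - k⁻¹‖ := by
  rw [show (k + k⁻¹) ^ 2 - 4 = (k - k⁻¹) ^ 2 by field_simp; ring, norm_pow,
    Real.sqrt_sq (norm_nonneg _)]

def birmanSchwingerKernel (v : ℤ → ℂ) (k : ℂ) (m n : ℤ) : ℂ :=
  (Real.sqrt (‖v m‖) : ℂ) * (k ^ (m - n).natAbs / (k - k⁻¹))
    * ((Real.sqrt (‖v n‖) : ℂ) * csgn (v n))

theorem norm_birmanSchwingerKernel_le (v : ℤ → ℂ) {k : ℂ} (hk : ‖k‖ ≤ 1) (m n : ℤ) :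
    ‖birmanSchwingerKernel v k m n‖ ≤ ‖(k - k⁻¹)⁻¹‖ * √‖v m‖ * √‖v n‖ := by
  have hpow : ‖k ^ (m - n).natAbs‖ ≤ 1 := by
    rw [norm_pow]; exact pow_le_one₀ (norm_nonneg k) hk
  rw [birmanSchwingerKernel, norm_mul, norm_mul, norm_mul, div_eq_mul_inv, norm_mul]
  simp only [Complex.norm_real, Real.norm_eq_abs, abs_of_nonneg (Real.sqrt_nonneg _)]
  calc _ ≤ √‖v m‖ * (1 * ‖(k - k⁻¹)⁻¹‖) * (√‖v n‖ * 1) := by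
        gcongr
        exact norm_csgn_le_one _
    _ = _ := by ring

/-- for `v ∈ ℓ¹(ℤ)` and `λ = k + k⁻¹` with `0 < |k| < 1`, the
Birman–Schwinger operator with matrix entries
`K(λ)_{m,n} = √|v_m| · k^{|m-n|}/(k - k⁻¹) · √|v_n| sgn(v_n)` is a bounded operator
on `ℓ²(ℤ)` with `‖K(λ)‖ ≤ ‖v‖_{ℓ¹} / √|λ² - 4|`. -/
theorem stmt5 (v : ℤ → ℂ) (hv : Summable fun n => ‖v n‖)
    (k : ℂ) (h0 : 0 < ‖k‖) (h1 : ‖k‖ < 1)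
    (lam : ℂ) (hlam : lam = k + k⁻¹) :
    ∃ K : l2Z →L[ℂ] l2Z,
      (∀ m n : ℤ,
        (inner ℂ (lp.single 2 m 1 : l2Z) (K (lp.single 2 n 1)) : ℂ) =
          (Real.sqrt (‖v m‖) : ℂ) * (k ^ (m - n).natAbs / (k - k⁻¹))
            * ((Real.sqrt (‖v n‖) : ℂ) * csgn (v n))) ∧
      ‖K‖ ≤ (∑' n : ℤ, ‖v n‖) / Real.sqrt (‖lam ^ 2 - 4‖) := by
  let s := sqrtNormL2 ℂ hv
  obtain ⟨K, hK, hKnorm⟩ := exists_clm_apply_eq_tsum_of_norm_le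
    (c := birmanSchwingerKernel v k) (a := (k - k⁻¹)⁻¹ • s) (b := s) fun m n =>
      (norm_birmanSchwingerKernel_le v h1.le m n).trans_eq (by simp [s, mul_assoc])
  refine ⟨K, inner_single_apply_single_of_apply_eq_tsum hK, hKnorm.trans_eq ?_⟩
  rw [hlam, sqrt_norm_add_inv_sq_sub_four (norm_pos_iff.mp h0), norm_smul, norm_sqrtNormL2,
    mul_assoc, Real.mul_self_sqrt (tsum_nonneg fun _ => norm_nonneg _), norm_inv, inv_mul_eq_div]
end
end

section
/- Let $\upsilon \in \ell^1(\mathbb{Z})$ be a complex sequence, $H_0$ the discrete Laplacian on $\ell^2(\mathbb{Z})$ given by $(H_0\psi)_n = \psi_{n-1} + \psi_{n+1}$, and $V$ the diagonal operator $(V\psi)_n = \upsilon_n \psi_n$. Then every eigenvalue $\lambda$ of $H_V = H_0 + V$ with $\lambda \notin [-2,2]$ satisfies $|\lambda^2 - 4| \le \|\upsilon\|_{\ell^1(\mathbb{Z})}^2$. -/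
noncomputable section

/-!
Write `λ = z + z⁻¹` with `0 < |z| < 1`, which is possible exactly because `λ ∉ [-2, 2]`; then
`λ² - 4 = (z - z⁻¹)²`. The free resolvent `(H₀ - λ)⁻¹` has kernel `z^|n - m| / (z - z⁻¹)`, bounded
by `|z - z⁻¹|⁻¹`. A bounded solution of the free equation `φₙ₋₁ + φₙ₊₁ = λ φₙ` is a combination of
`zⁿ` and `z⁻ⁿ`, hence zero, so an eigenfunction satisfies `ψ = -(H₀ - λ)⁻¹ (v ψ)`. Taking suprema,
`‖ψ‖_∞ ≤ |z - z⁻¹|⁻¹ ‖v‖₁ ‖ψ‖_∞`, i.e. `|λ² - 4|^{1/2} = |z - z⁻¹| ≤ ‖v‖₁`.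
-/

open Filter Topology

lemma add_inv_eq_two_mul_re_of_norm_eq_one {w : ℂ} (hw : ‖w‖ = 1) :
    w + w⁻¹ = ((2 * w.re : ℝ) : ℂ) := by
  rw [Complex.inv_def, Complex.normSq_eq_norm_sq, hw, one_pow, inv_one, Complex.ofReal_one,
    mul_one, Complex.add_conj]

lemma exists_add_inv_eq (lam : ℂ) : ∃ w : ℂ, w ≠ 0 ∧ w + w⁻¹ = lam := by
  obtain ⟨s, hs⟩ := IsAlgClosed.exists_pow_nat_eq (lam ^ 2 - 4) two_pos
  have hquad : (lam + s) / 2 * ((lam + s) / 2) + 1 = lam * ((lam + s) / 2) := by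
    linear_combination hs / 4
  generalize (lam + s) / 2 = w at hquad
  have hw0 : w ≠ 0 := fun h => by simp [h] at hquad
  refine ⟨w, hw0, ?_⟩
  field_simp
  linear_combination hquad

lemma exists_norm_lt_one_add_inv_eq {lam : ℂ}
    (hlam : ∀ x ∈ Set.Icc (-2 : ℝ) 2, (x : ℂ) ≠ lam) :
    ∃ z : ℂ, z ≠ 0 ∧ ‖z‖ < 1 ∧ z + z⁻¹ = lam := by
  obtain ⟨w, hw0, hw⟩ := exists_add_inv_eq lam
  rcases lt_trichotomy ‖w‖ 1 with h | h | h
  · exact ⟨w, hw0, h, hw⟩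
  · have hre := abs_le.mp (h ▸ Complex.abs_re_le_norm w)
    exact absurd (hw ▸ add_inv_eq_two_mul_re_of_norm_eq_one h).symm
      (hlam _ ⟨by linarith, by linarith⟩)
  · exact ⟨w⁻¹, inv_ne_zero hw0, by rw [norm_inv]; exact inv_lt_one_of_one_lt₀ h,
      by rw [inv_inv, add_comm, hw]⟩

lemma sub_inv_ne_zero_of_norm_lt_one {z : ℂ} (hz0 : z ≠ 0) (hz : ‖z‖ < 1) : z - z⁻¹ ≠ 0 := by
  intro h
  have hnorm : ‖z‖ * ‖z‖ = 1 := by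
    rw [← norm_mul, ← norm_one (α := ℂ), ← mul_inv_cancel₀ hz0, ← sub_eq_zero.mp h]
  nlinarith [norm_nonneg z]

def freeResolventKernel (z : ℂ) (n m : ℤ) : ℂ := z ^ (n - m).natAbs / (z - z⁻¹)

def freeResolvent (z : ℂ) (f : ℤ → ℂ) (n : ℤ) : ℂ := ∑' m, freeResolventKernel z n m * f m

section FreeResolvent

variable {z : ℂ} {f : ℤ → ℂ}

lemma norm_freeResolventKernel_le (hz : ‖z‖ ≤ 1) (n m : ℤ) :
    ‖freeResolventKernel z n m‖ ≤ ‖z - z⁻¹‖⁻¹ := by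
  rw [freeResolventKernel, norm_div, norm_pow, div_eq_mul_inv]
  exact mul_le_of_le_one_left (by positivity) (pow_le_one₀ (norm_nonneg z) hz)

lemma freeResolventKernel_sub (hzz : z - z⁻¹ ≠ 0) (n m : ℤ) :
    freeResolventKernel z (n - 1) m + freeResolventKernel z (n + 1) m
      - (z + z⁻¹) * freeResolventKernel z n m = if n = m then 1 else 0 := by
  simp only [freeResolventKernel]
  rcases lt_trichotomy n m with h | rfl | h
  · obtain ⟨j, hj⟩ : ∃ j : ℕ, m - n = j + 1 := ⟨(m - n - 1).toNat, by omega⟩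
    rw [show (n - 1 - m).natAbs = j + 2 by omega, show (n + 1 - m).natAbs = j by omega,
      show (n - m).natAbs = j + 1 by omega, if_neg h.ne]
    field_simp
    ring
  · simp only [sub_self, Int.natAbs_zero, pow_zero, if_true,
      show (n - 1 - n).natAbs = 1 by omega, show (n + 1 - n).natAbs = 1 by omega]
    calc _ = (z - z⁻¹) / (z - z⁻¹) := by ring
      _ = 1 := div_self hzz
  · obtain ⟨j, hj⟩ : ∃ j : ℕ, n - m = j + 1 := ⟨(n - m - 1).toNat, by omega⟩
    rw [show (n - 1 - m).natAbs = j by omega, show (n + 1 - m).natAbs = j + 2 by omega,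
      show (n - m).natAbs = j + 1 by omega, if_neg h.ne']
    field_simp
    ring

lemma summable_norm_freeResolventKernel_mul (hz : ‖z‖ ≤ 1) (hf : Summable fun m => ‖f m‖)
    (n : ℤ) : Summable fun m => ‖freeResolventKernel z n m * f m‖ :=
  .of_nonneg_of_le (fun _ => norm_nonneg _)
    (fun m => (norm_mul_le _ _).trans <|
      mul_le_mul_of_nonneg_right (norm_freeResolventKernel_le hz n m) (norm_nonneg _))
    (hf.mul_left _)

lemma norm_freeResolvent_le (hz : ‖z‖ ≤ 1) (hf : Summable fun m => ‖f m‖) (n : ℤ) :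
    ‖freeResolvent z f n‖ ≤ ‖z - z⁻¹‖⁻¹ * ∑' m, ‖f m‖ :=
  calc ‖freeResolvent z f n‖ ≤ ∑' m, ‖freeResolventKernel z n m * f m‖ :=
        norm_tsum_le_tsum_norm (summable_norm_freeResolventKernel_mul hz hf n)
    _ ≤ ∑' m, ‖z - z⁻¹‖⁻¹ * ‖f m‖ :=
        (summable_norm_freeResolventKernel_mul hz hf n).tsum_le_tsum
          (fun m => (norm_mul_le _ _).trans <|
            mul_le_mul_of_nonneg_right (norm_freeResolventKernel_le hz n m) (norm_nonneg _))
          (hf.mul_left _)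
    _ = ‖z - z⁻¹‖⁻¹ * ∑' m, ‖f m‖ := tsum_mul_left

lemma freeResolvent_sub (hz : ‖z‖ ≤ 1) (hzz : z - z⁻¹ ≠ 0)
    (hf : Summable fun m => ‖f m‖) (n : ℤ) :
    freeResolvent z f (n - 1) + freeResolvent z f (n + 1) - (z + z⁻¹) * freeResolvent z f n
      = f n := by
  have hsum (k : ℤ) := (summable_norm_freeResolventKernel_mul hz hf k).of_norm
  simp only [freeResolvent]
  rw [← (hsum (n - 1)).tsum_add (hsum (n + 1)), ← tsum_mul_left,
    ← ((hsum (n - 1)).add (hsum (n + 1))).tsum_sub ((hsum n).mul_left _)]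
  calc ∑' m, (freeResolventKernel z (n - 1) m * f m + freeResolventKernel z (n + 1) m * f m
          - (z + z⁻¹) * (freeResolventKernel z n m * f m))
      = ∑' m, (if n = m then 1 else 0) * f m := by
        refine tsum_congr fun m => ?_
        rw [← freeResolventKernel_sub hzz n m]
        ring
    _ = f n := by
        rw [tsum_eq_single n fun m hm => by rw [if_neg (Ne.symm hm), zero_mul], if_pos rfl,
          one_mul]

end FreeResolvent

lemma eq_zero_of_bounded_of_eq_mul_succ {z : ℂ} (hz : ‖z‖ < 1) {u : ℤ → ℂ} {C : ℝ}
    (hC : ∀ n, ‖u n‖ ≤ C) (hu : ∀ n, u n = z * u (n + 1)) : u = 0 := by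
  funext n
  have hpow (k : ℕ) : u n = z ^ k * u (n + k) := by
    induction k with
    | zero => simp
    | succ k ih => rw [ih, hu (n + k), pow_succ, Nat.cast_succ, ← add_assoc]; ring
  have hbound (k : ℕ) : ‖u n‖ ≤ ‖z‖ ^ k * C := by
    rw [hpow k, norm_mul, norm_pow]
    exact mul_le_mul_of_nonneg_left (hC _) (by positivity)
  have hlim : Tendsto (fun k : ℕ => ‖z‖ ^ k * C) atTop (𝓝 0) := by
    simpa using (tendsto_pow_atTop_nhds_zero_of_lt_one (norm_nonneg z) hz).mul_const C
  exact norm_le_zero_iff.mp (ge_of_tendsto' hlim hbound)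

lemma eq_zero_of_bounded_of_free {z : ℂ} (hz0 : z ≠ 0) (hz : ‖z‖ < 1) {φ : ℤ → ℂ} {C : ℝ}
    (hC : ∀ n, ‖φ n‖ ≤ C) (hφ : ∀ n, φ (n - 1) + φ (n + 1) = (z + z⁻¹) * φ n) : φ = 0 := by
  -- `φₙ₊₁ - z φₙ` decays forwards, so vanishes; then `φₙ₊₁ = z φₙ` makes `φ` decay backwards.
  have hdiff : (fun n => φ (n + 1) - z * φ n) = 0 := by
    refine eq_zero_of_bounded_of_eq_mul_succ hz (C := C + C) (fun n => ?_) (fun n => ?_)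
    · calc ‖φ (n + 1) - z * φ n‖ ≤ ‖φ (n + 1)‖ + ‖z‖ * ‖φ n‖ := by
            rw [← norm_mul]; exact norm_sub_le _ _
        _ ≤ C + 1 * C :=
            add_le_add (hC _) (mul_le_mul hz.le (hC n) (norm_nonneg _) zero_le_one)
        _ = C + C := by ring
    · have h := hφ (n + 1)
      rw [add_sub_cancel_right, add_assoc, one_add_one_eq_two] at h
      rw [add_assoc, one_add_one_eq_two]
      field_simp at h ⊢
      linear_combination -h
  have hstep (n : ℤ) : φ (n + 1) = z * φ n := sub_eq_zero.mp (congrFun hdiff n)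
  have hrefl : (fun n => φ (-n)) = 0 :=
    eq_zero_of_bounded_of_eq_mul_succ hz (fun n => hC _) fun n => by
      rw [← hstep, neg_add, neg_add_cancel_right]
  funext n
  simpa using congrFun hrefl (-n)

lemma eq_freeResolvent_of_bounded {z : ℂ} (hz0 : z ≠ 0) (hz : ‖z‖ < 1) {f ψ : ℤ → ℂ} {C : ℝ}
    (hf : Summable fun m => ‖f m‖) (hC : ∀ n, ‖ψ n‖ ≤ C)
    (hψ : ∀ n, ψ (n - 1) + ψ (n + 1) - (z + z⁻¹) * ψ n = f n) : ψ = freeResolvent z f := by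
  have hzz := sub_inv_ne_zero_of_norm_lt_one hz0 hz
  refine sub_eq_zero.mp <| eq_zero_of_bounded_of_free hz0 hz
    (C := C + ‖z - z⁻¹‖⁻¹ * ∑' m, ‖f m‖) (fun n => ?_) (fun n => ?_)
  · exact (norm_sub_le _ _).trans (add_le_add (hC n) (norm_freeResolvent_le hz.le hf n))
  · have h := freeResolvent_sub hz.le hzz hf n
    simp only [Pi.sub_apply]
    linear_combination hψ n - h

lemma one_le_of_forall_norm_le_mul_bound {ι E : Type*} [NormedAddCommGroup E] {u : ι → E}
    {C K : ℝ} (hC : ∀ i, ‖u i‖ ≤ C) (hu : u ≠ 0)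
    (h : ∀ S, (∀ i, ‖u i‖ ≤ S) → ∀ i, ‖u i‖ ≤ K * S) : 1 ≤ K := by
  obtain ⟨i, hi⟩ := Function.ne_iff.mp hu
  have : Nonempty ι := ⟨i⟩
  set S := ⨆ i, ‖u i‖
  have hS (j : ι) : ‖u j‖ ≤ S := le_ciSup ⟨C, Set.forall_mem_range.mpr hC⟩ j
  have hSpos : 0 < S := (norm_pos_iff.mpr hi).trans_le (hS i)
  have hSK : S ≤ K * S := ciSup_le (h S hS)
  nlinarith

lemma norm_sub_inv_le_of_bounded_eigenfunction {z : ℂ} (hz0 : z ≠ 0) (hz : ‖z‖ < 1)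
    {v ψ : ℤ → ℂ} {C : ℝ} (hv : Summable fun n => ‖v n‖) (hC : ∀ n, ‖ψ n‖ ≤ C) (hψ : ψ ≠ 0)
    (heig : ∀ n, ψ (n - 1) + ψ (n + 1) + v n * ψ n = (z + z⁻¹) * ψ n) :
    ‖z - z⁻¹‖ ≤ ∑' n, ‖v n‖ := by
  set f : ℤ → ℂ := fun m => -(v m * ψ m)
  have hvψ {S : ℝ} (hS : ∀ n, ‖ψ n‖ ≤ S) (m : ℤ) : ‖f m‖ ≤ ‖v m‖ * S := by
    rw [norm_neg, norm_mul]
    exact mul_le_mul_of_nonneg_left (hS m) (norm_nonneg _)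
  have hf : Summable fun m => ‖f m‖ :=
    .of_nonneg_of_le (fun _ => norm_nonneg _) (hvψ hC) (hv.mul_right C)
  have hrep : ψ = freeResolvent z f :=
    eq_freeResolvent_of_bounded hz0 hz hf hC fun n => by linear_combination heig n
  have hbound (S : ℝ) (hS : ∀ n, ‖ψ n‖ ≤ S) (n : ℤ) :
      ‖ψ n‖ ≤ ‖z - z⁻¹‖⁻¹ * (∑' m, ‖v m‖) * S :=
    calc ‖ψ n‖ ≤ ‖z - z⁻¹‖⁻¹ * ∑' m, ‖f m‖ := hrep ▸ norm_freeResolvent_le hz.le hf n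
      _ ≤ ‖z - z⁻¹‖⁻¹ * ∑' m, ‖v m‖ * S :=
          mul_le_mul_of_nonneg_left (hf.tsum_le_tsum (hvψ hS) (hv.mul_right S)) (by positivity)
      _ = ‖z - z⁻¹‖⁻¹ * (∑' m, ‖v m‖) * S := by rw [tsum_mul_right, mul_assoc]
  have hK := one_le_of_forall_norm_le_mul_bound hC hψ hbound
  rwa [mul_comm, ← div_eq_mul_inv, one_le_div
    (norm_pos_iff.mpr (sub_inv_ne_zero_of_norm_lt_one hz0 hz))] at hK

/-- for `v ∈ ℓ¹(ℤ)` and the discrete Schrödinger operator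
`H_V = H₀ + V` on `ℓ²(ℤ)` (acting by `(H_V ψ)_n = ψ_{n-1} + ψ_{n+1} + v_n ψ_n`),
every eigenvalue `λ ∉ [-2,2]` satisfies `|λ² - 4| ≤ ‖v‖_{ℓ¹}²`. -/
theorem stmt6 (v : ℤ → ℂ) (hv : Summable fun n => ‖v n‖)
    (HV : l2Z →L[ℂ] l2Z)
    (hHV : ∀ (ψ : l2Z) (n : ℤ), (HV ψ) n = ψ (n - 1) + ψ (n + 1) + v n * ψ n)
    (lam : ℂ) (hlam : ∀ x ∈ Set.Icc (-2 : ℝ) 2, (x : ℂ) ≠ lam)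
    (ψ : l2Z) (hψ : ψ ≠ 0) (heig : HV ψ = lam • ψ) :
    ‖lam ^ 2 - 4‖ ≤ (∑' n : ℤ, ‖v n‖) ^ 2 := by
  obtain ⟨z, hz0, hz, rfl⟩ := exists_norm_lt_one_add_inv_eq hlam
  have hψbd (n : ℤ) : ‖ψ n‖ ≤ ‖ψ‖ := lp.norm_apply_le_norm two_ne_zero ψ n
  have hψne : ⇑ψ ≠ 0 := fun h => hψ (lp.ext h)
  have heig' (n : ℤ) : ψ (n - 1) + ψ (n + 1) + v n * ψ n = (z + z⁻¹) * ψ n := by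
    rw [← hHV, heig, lp.coeFn_smul, Pi.smul_apply, smul_eq_mul]
  have hsq : (z + z⁻¹) ^ 2 - 4 = (z - z⁻¹) ^ 2 := by
    field_simp
    ring
  rw [hsq, norm_pow]
  exact pow_le_pow_left₀ (norm_nonneg _)
    (norm_sub_inv_le_of_bounded_eigenfunction hz0 hz hv hψbd hψne heig') 2
end
end

section
/- Let $\upsilon \in \ell^1(\mathbb{Z})$ be a complex sequence, and let $H_V = H_0 + V$ be the discrete Schrödinger operator on $\ell^2(\mathbb{Z})$. Then $H_V$ has no eigenvalues in the open interval $(-2,2)$. -/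
/-!
For `|λ| < 2` the Hermitian form `Q(a, b) = |a|² + |b|² - λ Re(ā b)` is positive definite and
is preserved by the free transfer map `(a, b) ↦ (b, λ b - a)`. Adding the potential changes `Q`
by a factor `1 + O(|v n|)`, so once the `ℓ¹` tail of `v` is small enough, `Q(ψ k, ψ (k + 1))`
stays above half its initial value along any solution of `H_V ψ = λ ψ`. For `ψ ∈ ℓ²` these
values tend to `0`, which forces two consecutive zeros of `ψ`; the recurrence then makes `ψ`
vanish.
-/

noncomputable section

open Filter Topology ComplexConjugate

theorem lp.tendsto_norm_cofinite_zero {ι : Type*} {E : ι → Type*}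
    [∀ i, NormedAddCommGroup (E i)] (f : lp E 2) : Tendsto (fun i => ‖f i‖) cofinite (𝓝 0) := by
  have h := ((lp.memℓp f).summable (by norm_num)).tendsto_cofinite_zero
  simpa [Function.comp_def, Real.sqrt_sq_eq_abs] using (Real.continuous_sqrt.tendsto 0).comp h

namespace DiscreteSchrodinger

def ellipticForm (lam : ℝ) (a b : ℂ) : ℝ :=
  ‖a‖ ^ 2 + ‖b‖ ^ 2 - lam * (conj a * b).re

theorem ellipticForm_transfer (lam : ℝ) (a b w : ℂ) :
    ellipticForm lam b ((lam - w) * b - a) = ellipticForm lam a b +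
      ((‖w‖ ^ 2 - lam * w.re) * ‖b‖ ^ 2 + 2 * (w * b * conj a).re) := by
  simp only [ellipticForm, Complex.sq_norm, Complex.normSq_apply, Complex.mul_re,
    Complex.mul_im, Complex.sub_re, Complex.sub_im, Complex.ofReal_re, Complex.ofReal_im,
    Complex.conj_re, Complex.conj_im]
  ring

theorem mul_add_sq_le_ellipticForm (lam : ℝ) (a b : ℂ) :
    (2 - |lam|) / 2 * (‖a‖ ^ 2 + ‖b‖ ^ 2) ≤ ellipticForm lam a b := by
  have hre : lam * (conj a * b).re ≤ |lam| * (‖a‖ * ‖b‖) := by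
    calc lam * (conj a * b).re ≤ |lam| * |(conj a * b).re| := by
          rw [← abs_mul]; exact le_abs_self _
      _ ≤ |lam| * (‖a‖ * ‖b‖) := by
          gcongr
          simpa using Complex.abs_re_le_norm (conj a * b)
  have hamgm := two_mul_le_add_sq ‖a‖ ‖b‖
  unfold ellipticForm
  nlinarith [abs_nonneg lam]

theorem ellipticForm_nonneg {lam : ℝ} (hlam : |lam| < 2) (a b : ℂ) :
    0 ≤ ellipticForm lam a b := by
  have : 0 < 2 - |lam| := by linarith
  exact le_trans (by positivity) (mul_add_sq_le_ellipticForm lam a b)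

theorem abs_ellipticForm_transfer_sub_le (lam : ℝ) (a b : ℂ) {w : ℂ} (hw : ‖w‖ ≤ 1) :
    |ellipticForm lam b ((lam - w) * b - a) - ellipticForm lam a b|
      ≤ ‖w‖ * (2 + |lam|) * (‖a‖ ^ 2 + ‖b‖ ^ 2) := by
  have hdiag : |‖w‖ ^ 2 - lam * w.re| ≤ ‖w‖ * (1 + |lam|) := by
    calc |‖w‖ ^ 2 - lam * w.re| ≤ ‖w‖ ^ 2 + |lam| * |w.re| := by
          have := abs_sub (‖w‖ ^ 2) (lam * w.re)
          rwa [abs_sq, abs_mul] at this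
      _ ≤ ‖w‖ * 1 + |lam| * ‖w‖ := by
          rw [sq]; gcongr; exact Complex.abs_re_le_norm w
      _ = ‖w‖ * (1 + |lam|) := by ring
  have hcross : |2 * (w * b * conj a).re| ≤ ‖w‖ * (‖a‖ ^ 2 + ‖b‖ ^ 2) := by
    calc |2 * (w * b * conj a).re| ≤ ‖w‖ * (2 * ‖a‖ * ‖b‖) := by
          rw [abs_mul, abs_two]
          have := Complex.abs_re_le_norm (w * b * conj a)
          simp only [norm_mul, Complex.norm_conj] at this
          linarith
      _ ≤ ‖w‖ * (‖a‖ ^ 2 + ‖b‖ ^ 2) := by gcongr; exact two_mul_le_add_sq _ _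
  rw [ellipticForm_transfer, add_sub_cancel_left]
  calc _ ≤ |‖w‖ ^ 2 - lam * w.re| * ‖b‖ ^ 2 + |2 * (w * b * conj a).re| :=
        (abs_add_le _ _).trans_eq (by rw [abs_mul, abs_sq])
    _ ≤ ‖w‖ * (1 + |lam|) * ‖b‖ ^ 2 + ‖w‖ * (‖a‖ ^ 2 + ‖b‖ ^ 2) := by gcongr
    _ ≤ ‖w‖ * (2 + |lam|) * (‖a‖ ^ 2 + ‖b‖ ^ 2) := by
        nlinarith [mul_nonneg (norm_nonneg w) (sq_nonneg ‖a‖),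
          mul_nonneg (mul_nonneg (norm_nonneg w) (sq_nonneg ‖a‖)) (abs_nonneg lam)]

theorem one_sub_mul_ellipticForm_le_transfer {lam : ℝ} (hlam : |lam| < 2) (a b : ℂ) {w : ℂ}
    (hw : ‖w‖ ≤ 1) :
    (1 - 2 * (2 + |lam|) / (2 - |lam|) * ‖w‖) * ellipticForm lam a b
      ≤ ellipticForm lam b ((lam - w) * b - a) := by
  have hgap : 0 < 2 - |lam| := by linarith
  have hS : ‖a‖ ^ 2 + ‖b‖ ^ 2 ≤ 2 / (2 - |lam|) * ellipticForm lam a b := by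
    rw [div_mul_eq_mul_div, le_div_iff₀ hgap]
    linarith [mul_add_sq_le_ellipticForm lam a b]
  have hΔ := abs_ellipticForm_transfer_sub_le lam a b hw
  calc (1 - 2 * (2 + |lam|) / (2 - |lam|) * ‖w‖) * ellipticForm lam a b
      = ellipticForm lam a b
          - ‖w‖ * (2 + |lam|) * (2 / (2 - |lam|) * ellipticForm lam a b) := by ring
    _ ≤ ellipticForm lam a b - ‖w‖ * (2 + |lam|) * (‖a‖ ^ 2 + ‖b‖ ^ 2) := by
        gcongr
    _ ≤ ellipticForm lam b ((lam - w) * b - a) := by linarith [neg_le_of_abs_le hΔ]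

theorem one_sub_sum_mul_le_of_step {q c : ℕ → ℝ} (hq : 0 ≤ q 0) (hc₀ : ∀ k, 0 ≤ c k)
    (hc₁ : ∀ k, c k ≤ 1) (hstep : ∀ k, (1 - c k) * q k ≤ q (k + 1)) (k : ℕ) :
    (1 - ∑ i ∈ Finset.range k, c i) * q 0 ≤ q k := by
  induction k with
  | zero => simp
  | succ k ih =>
    have hsum : 0 ≤ ∑ i ∈ Finset.range k, c i := Finset.sum_nonneg fun i _ => hc₀ i
    calc (1 - ∑ i ∈ Finset.range (k + 1), c i) * q 0
        ≤ (1 - c k) * ((1 - ∑ i ∈ Finset.range k, c i) * q 0) := by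
          rw [Finset.sum_range_succ]
          nlinarith [mul_nonneg (mul_nonneg (hc₀ k) hsum) hq]
      _ ≤ (1 - c k) * q k := by gcongr; linarith [hc₁ k]
      _ ≤ q (k + 1) := hstep k

section Recurrence

variable {lam : ℝ} {x w : ℕ → ℂ}

theorem half_ellipticForm_le (hlam : |lam| < 2)
    (hx : ∀ k, x (k + 2) = (lam - w k) * x (k + 1) - x k) (hw : Summable fun k => ‖w k‖)
    (hsmall : ∑' k, ‖w k‖ ≤ (2 - |lam|) / (4 * (2 + |lam|))) (k : ℕ) :
    ellipticForm lam (x 0) (x 1) / 2 ≤ ellipticForm lam (x k) (x (k + 1)) := by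
  set K := 2 * (2 + |lam|) / (2 - |lam|) with hK_def
  have hgap : 0 < 2 - |lam| := by linarith
  have hK : 0 ≤ K := by positivity
  have hKsum : K * ∑' k, ‖w k‖ ≤ 1 / 2 := by
    calc K * ∑' k, ‖w k‖ ≤ K * ((2 - |lam|) / (4 * (2 + |lam|))) := by gcongr
      _ = 1 / 2 := by rw [hK_def]; field_simp; ring
  have hpartial (k : ℕ) : ∑ i ∈ Finset.range k, K * ‖w i‖ ≤ 1 / 2 := by
    rw [← Finset.mul_sum]
    exact le_trans (by gcongr; exact hw.sum_le_tsum _ fun i _ => norm_nonneg _) hKsum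
  have hcoeff (k : ℕ) : K * ‖w k‖ ≤ 1 / 2 :=
    le_trans (by gcongr; exact hw.le_tsum k fun j _ => norm_nonneg _) hKsum
  have hw₁ (k : ℕ) : ‖w k‖ ≤ 1 := by
    have : ‖w k‖ ≤ ∑' k, ‖w k‖ := hw.le_tsum k fun j _ => norm_nonneg _
    have : (2 - |lam|) / (4 * (2 + |lam|)) ≤ 1 := by
      rw [div_le_one (by positivity)]; linarith [abs_nonneg lam]
    linarith
  have hstep (k : ℕ) : (1 - K * ‖w k‖) * ellipticForm lam (x k) (x (k + 1))
      ≤ ellipticForm lam (x (k + 1)) (x (k + 1 + 1)) := by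
    rw [hx k]
    exact one_sub_mul_ellipticForm_le_transfer hlam _ _ (hw₁ k)
  have hgrowth := one_sub_sum_mul_le_of_step (q := fun k => ellipticForm lam (x k) (x (k + 1)))
    (ellipticForm_nonneg hlam _ _) (fun k => by positivity) (fun k => by linarith [hcoeff k])
    hstep k
  have := hpartial k
  nlinarith [ellipticForm_nonneg hlam (x 0) (x 1)]

theorem initial_eq_zero_of_tendsto_zero (hlam : |lam| < 2)
    (hx : ∀ k, x (k + 2) = (lam - w k) * x (k + 1) - x k) (hw : Summable fun k => ‖w k‖)
    (hsmall : ∑' k, ‖w k‖ ≤ (2 - |lam|) / (4 * (2 + |lam|)))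
    (hx₀ : Tendsto x atTop (𝓝 0)) : x 0 = 0 ∧ x 1 = 0 := by
  have hform : Tendsto (fun k => ellipticForm lam (x k) (x (k + 1))) atTop (𝓝 0) := by
    have hcont : Continuous fun p : ℂ × ℂ => ellipticForm lam p.1 p.2 := by
      unfold ellipticForm; fun_prop
    simpa [ellipticForm, Function.comp_def] using
      (hcont.tendsto (0, 0)).comp (hx₀.prodMk_nhds (hx₀.comp (tendsto_add_atTop_nat 1)))
  have hle : ellipticForm lam (x 0) (x 1) / 2 ≤ 0 :=
    ge_of_tendsto hform (Eventually.of_forall (half_ellipticForm_le hlam hx hw hsmall))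
  have hlower := mul_add_sq_le_ellipticForm lam (x 0) (x 1)
  have hgap : 0 < 2 - |lam| := by linarith
  have hzero : ‖x 0‖ ^ 2 + ‖x 1‖ ^ 2 = 0 := le_antisymm (by nlinarith) (by positivity)
  rw [add_eq_zero_iff_of_nonneg (by positivity) (by positivity)] at hzero
  simpa using hzero

end Recurrence

section Lattice

variable {v : ℤ → ℂ} {F : ℤ → ℂ}

theorem eq_zero_of_consecutive_eq_zero {E : ℂ}
    (hF : ∀ n, F (n - 1) + F (n + 1) + v n * F n = E * F n) {n : ℤ} (h₀ : F n = 0)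
    (h₁ : F (n + 1) = 0) : F = 0 := by
  have hpair (m : ℤ) : F m = 0 ∧ F (m + 1) = 0 := by
    refine Int.inductionOn' m n ⟨h₀, h₁⟩ ?_ ?_
    · rintro k - ⟨hk, hk₁⟩
      have := hF (k + 1)
      rw [add_sub_cancel_right] at this
      exact ⟨hk₁, by linear_combination this - hk + (E - v (k + 1)) * hk₁⟩
    · rintro k - ⟨hk, hk₁⟩
      exact ⟨by linear_combination hF k - hk₁ + (E - v k) * hk, by rwa [sub_add_cancel]⟩
  exact funext fun m => (hpair m).1

theorem eq_zero_of_tendsto_atTop_zero {lam : ℝ} (hlam : |lam| < 2)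
    (hv : Summable fun n => ‖v n‖) (hF : ∀ n, F (n - 1) + F (n + 1) + v n * F n = lam * F n)
    (hF₀ : Tendsto F atTop (𝓝 0)) : F = 0 := by
  have hε : 0 < (2 - |lam|) / (4 * (2 + |lam|)) := by
    have : 0 < 2 - |lam| := by linarith
    positivity
  obtain ⟨N, hN⟩ := ((tendsto_sum_nat_add fun k : ℕ => ‖v k‖).eventually (gt_mem_nhds hε)).exists
  set x : ℕ → ℂ := fun k => F (N - 1 + k)
  set w : ℕ → ℂ := fun k => v (N + k)
  have hx (k : ℕ) : x (k + 2) = (lam - w k) * x (k + 1) - x k := by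
    have := hF (N + k)
    simp only [x, w]
    push_cast
    rw [show (N : ℤ) - 1 + (k + 2) = N + k + 1 by ring, show (N : ℤ) - 1 + (k + 1) = N + k by ring,
      show (N : ℤ) - 1 + k = N + k - 1 by ring]
    linear_combination this
  have hw_eq : (fun k => ‖w k‖) = fun k : ℕ => ‖v ↑(k + N)‖ := by
    ext k; simp only [w]; push_cast; ring_nf
  have hw : Summable fun k => ‖w k‖ := by
    rw [hw_eq]
    exact (summable_nat_add_iff N).2 (hv.comp_injective Nat.cast_injective)
  have hsmall : ∑' k, ‖w k‖ ≤ (2 - |lam|) / (4 * (2 + |lam|)) := by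
    rw [hw_eq]; exact hN.le
  have hx₀ : Tendsto x atTop (𝓝 0) :=
    hF₀.comp (tendsto_atTop_add_const_left _ _ tendsto_natCast_atTop_atTop)
  obtain ⟨h₀, h₁⟩ := initial_eq_zero_of_tendsto_zero hlam hx hw hsmall hx₀
  exact eq_zero_of_consecutive_eq_zero hF h₀ (by simpa [x] using h₁)

end Lattice

end DiscreteSchrodinger

/-- for `v ∈ ℓ¹(ℤ)`, the discrete Schrödinger operator `H_V = H₀ + V`
on `ℓ²(ℤ)` has no eigenvalues in the open interval `(-2, 2)`. -/
theorem stmt7 (v : ℤ → ℂ) (hv : Summable fun n => ‖v n‖)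
    (HV : l2Z →L[ℂ] l2Z)
    (hHV : ∀ (ψ : l2Z) (n : ℤ), (HV ψ) n = ψ (n - 1) + ψ (n + 1) + v n * ψ n)
    (lam : ℝ) (hlam : lam ∈ Set.Ioo (-2 : ℝ) 2)
    (ψ : l2Z) (heig : HV ψ = (lam : ℂ) • ψ) :
    ψ = 0 := by
  have hlam' : |lam| < 2 := abs_lt.2 hlam
  have heq (n : ℤ) : ψ (n - 1) + ψ (n + 1) + v n * ψ n = lam * ψ n := by
    rw [← hHV, heig]; rfl
  have hdecay : Tendsto (⇑ψ) atTop (𝓝 0) := tendsto_zero_iff_norm_tendsto_zero.2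
    ((lp.tendsto_norm_cofinite_zero ψ).mono_left atTop_le_cofinite)
  exact lp.ext (DiscreteSchrodinger.eq_zero_of_tendsto_atTop_zero hlam' hv heq hdecay)
end
end

section
/- (Optimality for $\ell^1$) Let $Q > 0$ and let $\lambda \in \mathbb{C}\setminus(-2,2)$ satisfy $|\lambda^2 - 4| = Q^2$ and $\lambda \notin [-2,2]$. Then there exists $k \in \mathbb{C}$ with $0 < |k| < 1$ such that $\lambda = k + k^{-1}$ and $|k - k^{-1}| = Q$, and with $\omega := k^{-1} - k$ and the delta potential $\upsilon_n = \omega\delta_{n,0}$, one has $\|\upsilon\|_{\ell^1(\mathbb{Z})} = Q$ and $\lambda$ is an eigenvalue of $H_V = H_0 + V$. -/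
/-!
Every `λ ∉ [-2, 2]` is `k + k⁻¹` for some `k` with `0 < ‖k‖ < 1`: solve `k² - λk + 1 = 0`;
the two roots have product `1`, and a root on the unit circle would force `λ = 2 Re k ∈ [-2, 2]`.
Then `(k - k⁻¹)² = λ² - 4`, so `‖k - k⁻¹‖ = Q`, and the exponentially decaying sequence
`ψ n = k ^ |n|` lies in `ℓ²(ℤ)` and solves `ψ (n-1) + ψ (n+1) = λ ψ n` away from `n = 0`.
At `n = 0` it gives `2k = λ - (k⁻¹ - k)`, which is exactly compensated by the delta potential
of strength `k⁻¹ - k`.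
-/

noncomputable section

open Complex

theorem exists_eq_add_inv {K : Type*} [Field K] [IsAlgClosed K] [NeZero (2 : K)] (lam : K) :
    ∃ a : K, a ≠ 0 ∧ lam = a + a⁻¹ := by
  obtain ⟨d, hd⟩ := IsAlgClosed.exists_eq_mul_self (lam ^ 2 - 4)
  have hroots : (lam + d) / 2 * ((lam - d) / 2) = 1 := by
    field_simp
    linear_combination hd
  refine ⟨(lam + d) / 2, left_ne_zero_of_mul_eq_one hroots, ?_⟩
  rw [← eq_inv_of_mul_eq_one_right hroots]
  field_simp
  ring

theorem Complex.add_inv_eq_ofReal_of_norm_eq_one {a : ℂ} (ha : ‖a‖ = 1) :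
    a + a⁻¹ = (2 * a.re : ℝ) := by
  rw [inv_eq_conj ha, add_conj]

theorem Complex.exists_norm_lt_one_eq_add_inv {lam : ℂ}
    (hlam : ∀ x ∈ Set.Icc (-2 : ℝ) 2, (x : ℂ) ≠ lam) :
    ∃ k : ℂ, k ≠ 0 ∧ ‖k‖ < 1 ∧ lam = k + k⁻¹ := by
  obtain ⟨a, ha0, rfl⟩ := exists_eq_add_inv lam
  rcases lt_trichotomy ‖a‖ 1 with hlt | heq | hgt
  · exact ⟨a, ha0, hlt, rfl⟩
  · have hre : |a.re| ≤ 1 := heq ▸ abs_re_le_norm a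
    refine absurd (add_inv_eq_ofReal_of_norm_eq_one heq).symm (hlam _ ?_)
    constructor <;> linarith [abs_le.mp hre]
  · refine ⟨a⁻¹, inv_ne_zero ha0, ?_, by rw [inv_inv, add_comm]⟩
    rw [norm_inv]
    exact inv_lt_one_of_one_lt₀ hgt

theorem sub_inv_sq_eq_add_inv_sq_sub_four {K : Type*} [Field K] {k : K} (hk : k ≠ 0) :
    (k - k⁻¹) ^ 2 = (k + k⁻¹) ^ 2 - 4 := by
  field_simp
  ring

theorem tsum_norm_ite_eq {β E : Type*} [DecidableEq β] [SeminormedAddCommGroup E] (b : β)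
    (c : E) : (∑' n : β, ‖(if n = b then c else 0 : E)‖) = ‖c‖ := by
  simp [apply_ite norm]

theorem summable_pow_natAbs {r : ℝ} (hr0 : 0 ≤ r) (hr1 : r < 1) :
    Summable fun n : ℤ => r ^ n.natAbs := by
  rw [summable_int_iff_summable_nat_and_neg]
  simp only [Int.natAbs_neg, Int.natAbs_natCast]
  exact ⟨summable_geometric_of_lt_one hr0 hr1, summable_geometric_of_lt_one hr0 hr1⟩

theorem memℓp_pow_natAbs {k : ℂ} (hk : ‖k‖ < 1) {p : ENNReal} (hp : 0 < p.toReal) :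
    Memℓp (fun n : ℤ => k ^ n.natAbs) p := by
  refine memℓp_gen ?_
  simp_rw [norm_pow, ← Real.rpow_pow_comm (norm_nonneg k)]
  exact summable_pow_natAbs (by positivity) (Real.rpow_lt_one (norm_nonneg k) hk hp)

theorem pow_add_pow_add_two {K : Type*} [Field K] {k : K} (hk : k ≠ 0) (m : ℕ) :
    k ^ m + k ^ (m + 2) = (k + k⁻¹) * k ^ (m + 1) := by
  field_simp
  ring

theorem pow_natAbs_sub_one_add_pow_natAbs_add_one {K : Type*} [Field K] {k : K} (hk : k ≠ 0)
    (n : ℤ) :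
    k ^ (n - 1).natAbs + k ^ (n + 1).natAbs + (if n = 0 then k⁻¹ - k else 0) * k ^ n.natAbs =
      (k + k⁻¹) * k ^ n.natAbs := by
  rcases eq_or_ne n 0 with rfl | hn
  · simp
  rw [if_neg hn, zero_mul, add_zero]
  obtain ⟨m, hm⟩ := Nat.exists_eq_add_one_of_ne_zero (Int.natAbs_ne_zero.2 hn)
  rw [hm, ← pow_add_pow_add_two hk m]
  rcases Int.natAbs_eq n with h | h
  · rw [show (n - 1).natAbs = m by omega, show (n + 1).natAbs = m + 2 by omega]
  · rw [show (n - 1).natAbs = m + 2 by omega, show (n + 1).natAbs = m by omega, add_comm]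

theorem stmt19_general (Q : ℝ) (hQ : 0 < Q) (lam : ℂ)
    (h2 : ‖lam ^ 2 - 4‖ = Q ^ 2)
    (h3 : ∀ x ∈ Set.Icc (-2 : ℝ) 2, (x : ℂ) ≠ lam) :
    ∃ k : ℂ, 0 < ‖k‖ ∧ ‖k‖ < 1 ∧ lam = k + k⁻¹ ∧
      ‖k - k⁻¹‖ = Q ∧
      (∑' n : ℤ, ‖(if n = 0 then k⁻¹ - k else 0 : ℂ)‖) = Q ∧
      ∀ HV : l2Z →L[ℂ] l2Z,
        (∀ (ψ : l2Z) (n : ℤ),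
          (HV ψ) n = ψ (n - 1) + ψ (n + 1) + (if n = 0 then k⁻¹ - k else 0) * ψ n) →
        ∃ ψ : l2Z, ψ ≠ 0 ∧ HV ψ = lam • ψ := by
  obtain ⟨k, hk0, hk1, rfl⟩ := exists_norm_lt_one_eq_add_inv h3
  have hnorm : ‖k - k⁻¹‖ = Q := by
    rw [← sub_inv_sq_eq_add_inv_sq_sub_four hk0, norm_pow] at h2
    exact (pow_left_inj₀ (norm_nonneg _) hQ.le two_ne_zero).1 h2
  refine ⟨k, norm_pos_iff.2 hk0, hk1, rfl, hnorm, ?_, fun HV hHV => ?_⟩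
  · rw [tsum_norm_ite_eq, norm_sub_rev, hnorm]
  let ψ : l2Z := ⟨fun n => k ^ n.natAbs, memℓp_pow_natAbs hk1 (by norm_num)⟩
  refine ⟨ψ, fun h => by simpa [ψ] using congr_arg (fun φ : l2Z => φ 0) h, ?_⟩
  ext n
  rw [hHV, lp.coeFn_smul, Pi.smul_apply, smul_eq_mul]
  exact pow_natAbs_sub_one_add_pow_natAbs_add_one hk0 n

/-- optimality for `ℓ¹`: let `Q > 0` and `λ ∈ ℂ \ (-2,2)` with
`|λ² - 4| = Q²` and `λ ∉ [-2,2]`. Then there is `k` with `0 < |k| < 1`,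
`λ = k + k⁻¹`, `|k - k⁻¹| = Q`, and for the delta potential `v_n = ω δ_{n,0}` with
`ω := k⁻¹ - k` one has `‖v‖_{ℓ¹} = Q` and `λ` is an eigenvalue of `H_V = H₀ + V`. -/
theorem stmt19 (Q : ℝ) (hQ : 0 < Q) (lam : ℂ)
    (h1 : ∀ x ∈ Set.Ioo (-2 : ℝ) 2, (x : ℂ) ≠ lam)
    (h2 : ‖lam ^ 2 - 4‖ = Q ^ 2)
    (h3 : ∀ x ∈ Set.Icc (-2 : ℝ) 2, (x : ℂ) ≠ lam) :
    ∃ k : ℂ, 0 < ‖k‖ ∧ ‖k‖ < 1 ∧ lam = k + k⁻¹ ∧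
      ‖k - k⁻¹‖ = Q ∧
      (∑' n : ℤ, ‖(if n = 0 then k⁻¹ - k else 0 : ℂ)‖) = Q ∧
      ∀ HV : l2Z →L[ℂ] l2Z,
        (∀ (ψ : l2Z) (n : ℤ),
          (HV ψ) n = ψ (n - 1) + ψ (n + 1) + (if n = 0 then k⁻¹ - k else 0) * ψ n) →
        ∃ ψ : l2Z, ψ ≠ 0 ∧ HV ψ = lam • ψ :=
  stmt19_general Q hQ lam h2 h3
end
end
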